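/- Let $\lambda_1,\dots,\lambda_n$ be positive real numbers. If $\sum_{i=1}^n (1/\lambda_i) \le v_1$ and $\sum_{i=1}^n \lambda_i \le v_2$, then for every $i$ one has $|\lambda_i - 1| \le \sqrt{v_2(v_1+v_2-2n)}$. -/

import Mathlib

/-!
Since `(λ - 1)² / λ = 1/λ + λ - 2` is non-negative for `λ > 0`, each such term is bounded by
the whole sum `∑ 1/λⱼ + ∑ λⱼ - 2n ≤ v₁ + v₂ - 2n`. Multiplying by `λᵢ ≤ ∑ λⱼ ≤ v₂` gives
`(λᵢ - 1)² ≤ v₂ (v₁ + v₂ - 2n)`.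
-/

open Finset

theorem sq_sub_one_div_self {x : ℝ} (hx : x ≠ 0) : (x - 1) ^ 2 / x = 1 / x + x - 2 := by
  field_simp
  ring

theorem sum_sq_sub_one_div_self {ι : Type*} (s : Finset ι) {lam : ι → ℝ}
    (hlam : ∀ i ∈ s, lam i ≠ 0) :
    ∑ i ∈ s, (lam i - 1) ^ 2 / lam i = ∑ i ∈ s, 1 / lam i + ∑ i ∈ s, lam i - 2 * #s := by
  rw [sum_congr rfl fun i hi => sq_sub_one_div_self (hlam i hi), sum_sub_distrib,
    sum_add_distrib]
  simp [mul_comm]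

theorem sq_sub_one_le_of_sum_inv_le_of_sum_le {ι : Type*} {s : Finset ι} {lam : ι → ℝ}
    {v1 v2 : ℝ} (hpos : ∀ i ∈ s, 0 < lam i) (h1 : ∑ i ∈ s, 1 / lam i ≤ v1)
    (h2 : ∑ i ∈ s, lam i ≤ v2) {i : ι} (hi : i ∈ s) :
    (lam i - 1) ^ 2 ≤ v2 * (v1 + v2 - 2 * #s) := by
  have hnonneg : ∀ j ∈ s, 0 ≤ (lam j - 1) ^ 2 / lam j :=
    fun j hj => div_nonneg (sq_nonneg _) (hpos j hj).le
  have hterm : (lam i - 1) ^ 2 / lam i ≤ v1 + v2 - 2 * #s :=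
    calc (lam i - 1) ^ 2 / lam i ≤ ∑ j ∈ s, (lam j - 1) ^ 2 / lam j := single_le_sum hnonneg hi
      _ = ∑ j ∈ s, 1 / lam j + ∑ j ∈ s, lam j - 2 * #s :=
        sum_sq_sub_one_div_self s fun j hj => (hpos j hj).ne'
      _ ≤ v1 + v2 - 2 * #s := by linarith
  have hle : lam i ≤ v2 := (single_le_sum (fun j hj => (hpos j hj).le) hi).trans h2
  calc (lam i - 1) ^ 2 = lam i * ((lam i - 1) ^ 2 / lam i) :=
        (mul_div_cancel₀ _ (hpos i hi).ne').symm
    _ ≤ v2 * (v1 + v2 - 2 * #s) := mul_le_mul hle hterm (hnonneg i hi) ((hpos i hi).le.trans hle)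

/-- Shi's eigenvalue estimate: if `λ i > 0`, `∑ 1/λ i ≤ v₁` and `∑ λ i ≤ v₂`,
then `|λ i - 1| ≤ √(v₂ (v₁ + v₂ - 2n))` for every `i`. -/
theorem stmt0 (n : ℕ) (lam : Fin n → ℝ) (v1 v2 : ℝ)
    (hpos : ∀ i, 0 < lam i)
    (h1 : ∑ i, (1 / lam i) ≤ v1)
    (h2 : ∑ i, lam i ≤ v2) :
    ∀ i, |lam i - 1| ≤ Real.sqrt (v2 * (v1 + v2 - 2 * n)) := by
  intro i
  have hsq := sq_sub_one_le_of_sum_inv_le_of_sum_le (fun j _ => hpos j) h1 h2 (mem_univ i)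
  rw [card_univ, Fintype.card_fin] at hsq
  exact Real.abs_le_sqrt hsq
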